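/- arXiv:2402.09380 — 3 statements merged into one kernel-verified Lean document; each statement's English description precedes it below -/
import Mathlib

section
/- Let H be a Hilbert space, Ψ ∈ H, and let (A_Λ) be a net of self-adjoint operators converging to a self-adjoint operator A in the sense that ⟨Ψ, e^{itA_Λ} Ψ⟩ → ⟨Ψ, e^{itA} Ψ⟩ for every t ∈ ℝ. If moreover ⟨Ψ, P_Λ Ψ⟩ ≥ ⟨Ψ, P Ψ⟩ for all Λ, where P_Λ and P are the orthogonal projections onto ker A_Λ and ker A respectively, then lim_Λ ⟨Ψ, P_Λ Ψ⟩ = ⟨Ψ, P Ψ⟩. -/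
/-!
The atom at `0` is upper semicontinuous under pointwise convergence of characteristic functions;
together with the lower bound `μ {0} ≤ μ_Λ {0}` this gives convergence. To see it, test against
`Kₙ(s) = ‖n⁻¹ ∑_{j<n} e^{ijτs}‖²`. It is a trigonometric polynomial, so `∫ Kₙ dμ_Λ → ∫ Kₙ dμ`
for each fixed `n`; it dominates the indicator of `{0}`; and as `n → ∞` it converges pointwise to
the indicator of `(2π/τ)ℤ`. Choosing `τ` so that `μ` has no atom on `(2π/τ)ℤ \ {0}`, dominated
convergence gives `∫ Kₙ dμ → μ {0}`, hence `limsup μ_Λ {0} ≤ μ {0}`.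
-/
open MeasureTheory Filter Topology Complex

lemma norm_exp_ofReal_mul_ofReal_mul_I (τ s : ℝ) : ‖exp (τ * s * I)‖ = 1 := by
  exact_mod_cast norm_exp_ofReal_mul_I (τ * s)

lemma countable_setOf_exp_mul_mul_I_eq_one {a : ℝ} (ha : a ≠ 0) :
    {x : ℝ | exp (a * x * I) = 1}.Countable := by
  refine (Set.countable_range fun k : ℤ => 2 * Real.pi * k / a).mono fun x hx => ?_
  obtain ⟨k, hk⟩ := exp_eq_one_iff.1 hx
  have him := congrArg im hk
  simp only [mul_im, mul_re, ofReal_re, ofReal_im, I_re, I_im, intCast_re, intCast_im,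
    re_ofNat, im_ofNat] at him
  exact ⟨k, by field_simp; linarith⟩

lemma exists_measure_setOf_exp_eq_one_eq_measure_singleton_zero (μ : Measure ℝ) [SFinite μ] :
    ∃ τ : ℝ, μ {s : ℝ | exp (τ * s * I) = 1} = μ {0} := by
  -- `μ` has countably many atoms, so only countably many `τ` put an atom on `(2π/τ)ℤ \ {0}`.
  have hatoms : {s : ℝ | s ≠ 0 ∧ 0 < μ {s}}.Countable := by
    refine (Measure.countable_meas_level_set_pos (μ := μ) measurable_id).mono fun s hs => ?_
    simpa [Set.ofPred_eq_eq_singleton] using hs.2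
  have hbad : ({0} ∪ ⋃ s ∈ {s : ℝ | s ≠ 0 ∧ 0 < μ {s}},
      {τ : ℝ | exp (τ * s * I) = 1}).Countable := by
    refine (Set.countable_singleton 0).union (hatoms.biUnion fun s hs => ?_)
    simpa only [mul_comm] using countable_setOf_exp_mul_mul_I_eq_one hs.1
  obtain ⟨τ, hτ⟩ := (hbad.dense_compl ℝ).nonempty
  have hτ0 : τ ≠ 0 := fun h => hτ (Or.inl h)
  set L := {s : ℝ | exp (τ * s * I) = 1}
  have hnull : μ (L \ {0}) = 0 := by
    refine (measure_null_iff_singleton ((countable_setOf_exp_mul_mul_I_eq_one hτ0).mono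
      Set.sdiff_subset)).2 fun s ⟨hs, hs0⟩ => ?_
    by_contra h
    exact hτ (Or.inr (Set.mem_biUnion ⟨hs0, pos_iff_ne_zero.2 h⟩ hs))
  refine ⟨τ, le_antisymm ?_ (measure_mono (Set.singleton_subset_iff.2 (by simp)))⟩
  calc μ L ≤ μ (L ∩ {0}) + μ (L \ {0}) := measure_le_inter_add_sdiff _ _ _
    _ ≤ μ {0} := by rw [hnull, add_zero]; exact measure_mono Set.inter_subset_right

/-- The Fejér kernel of the lattice `(2π/τ)ℤ`, normalised to take the value `1` on it. -/
noncomputable def fejerKernel (τ : ℝ) (n : ℕ) (s : ℝ) : ℝ :=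
  ‖(∑ j ∈ Finset.range n, exp (τ * s * I) ^ j) / n‖ ^ 2

namespace fejerKernel

lemma nonneg (τ : ℝ) (n : ℕ) (s : ℝ) : 0 ≤ fejerKernel τ n s := sq_nonneg _

lemma le_one (τ : ℝ) (n : ℕ) (s : ℝ) : fejerKernel τ n s ≤ 1 := by
  have hsum : ‖∑ j ∈ Finset.range n, exp (τ * s * I) ^ j‖ ≤ n := by
    simpa [norm_exp_ofReal_mul_ofReal_mul_I] using
      norm_sum_le (Finset.range n) fun j => exp (τ * s * I) ^ j
  have hnorm : ‖(∑ j ∈ Finset.range n, exp (τ * s * I) ^ j) / n‖ ≤ 1 := by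
    rcases n.eq_zero_or_pos with rfl | hn
    · simp
    rw [norm_div, norm_natCast]
    exact div_le_one_of_le₀ hsum n.cast_nonneg
  exact pow_le_one₀ (norm_nonneg _) hnorm

lemma continuous (τ : ℝ) (n : ℕ) : Continuous (fejerKernel τ n) := by
  unfold fejerKernel
  fun_prop

lemma integrable (τ : ℝ) (n : ℕ) (ν : Measure ℝ) [IsFiniteMeasure ν] :
    Integrable (fejerKernel τ n) ν :=
  Integrable.of_bound (continuous τ n).aestronglyMeasurable 1 <| .of_forall fun s => by
    rw [Real.norm_of_nonneg (nonneg τ n s)]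
    exact le_one τ n s

lemma eq_one_of_exp_eq_one {τ s : ℝ} (hs : exp (τ * s * I) = 1) {n : ℕ} (hn : n ≠ 0) :
    fejerKernel τ n s = 1 := by
  simp [fejerKernel, hs, hn]

lemma tendsto_zero_of_exp_ne_one {τ s : ℝ} (hs : exp (τ * s * I) ≠ 1) :
    Tendsto (fun n => fejerKernel τ n s) atTop (𝓝 0) := by
  set z := exp (τ * s * I)
  have hz : 0 < ‖z - 1‖ := norm_pos_iff.2 (sub_ne_zero.2 hs)
  have hbound (n : ℕ) : fejerKernel τ n s ≤ (2 / ‖z - 1‖) ^ 2 / n := by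
    rcases n.eq_zero_or_pos with rfl | hn
    · simp [fejerKernel]
    have hgeom : ‖∑ j ∈ Finset.range n, z ^ j‖ ≤ 2 / ‖z - 1‖ := by
      rw [geom_sum_eq hs, norm_div]
      gcongr
      calc ‖z ^ n - 1‖ ≤ ‖z ^ n‖ + ‖(1 : ℂ)‖ := norm_sub_le _ _
        _ = 2 := by rw [norm_pow, norm_exp_ofReal_mul_ofReal_mul_I]; norm_num
    have hn1 : (1 : ℝ) ≤ n := by exact_mod_cast hn
    calc fejerKernel τ n s ≤ (2 / ‖z - 1‖ / n) ^ 2 := by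
          rw [fejerKernel, norm_div, norm_natCast]
          gcongr
      _ = (2 / ‖z - 1‖) ^ 2 / n ^ 2 := div_pow _ _ _
      _ ≤ (2 / ‖z - 1‖) ^ 2 / n := by gcongr; nlinarith
  exact squeeze_zero (nonneg τ · s) hbound (tendsto_const_div_atTop_nhds_zero_nat _)

lemma eq_sum_re_exp (τ : ℝ) (n : ℕ) (s : ℝ) :
    fejerKernel τ n s = (∑ j ∈ Finset.range n, ∑ k ∈ Finset.range n,
      (exp (((j - k : ℝ) * τ : ℝ) * s * I)).re) / n ^ 2 := by
  rw [fejerKernel, norm_div, div_pow, norm_natCast, ← normSq_eq_norm_sq, ← ofReal_re (normSq _),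
    ← mul_conj, map_sum, Finset.sum_mul_sum, re_sum]
  congr 1
  refine Finset.sum_congr rfl fun j _ => ?_
  rw [re_sum]
  refine Finset.sum_congr rfl fun k _ => ?_
  rw [map_pow, ← exp_conj, ← exp_nat_mul, ← exp_nat_mul, ← exp_add]
  congr 2
  simp only [map_mul, conj_I, conj_ofReal]
  push_cast
  ring

lemma integral_eq_sum_re_charFun (τ : ℝ) (n : ℕ) (ν : Measure ℝ) [IsFiniteMeasure ν] :
    ∫ s, fejerKernel τ n s ∂ν = (∑ j ∈ Finset.range n, ∑ k ∈ Finset.range n,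
      (charFun ν ((j - k : ℝ) * τ)).re) / n ^ 2 := by
  have hint (t : ℝ) : Integrable (fun s : ℝ => exp (t * s * I)) ν := by
    refine Integrable.of_bound (by fun_prop) 1 (.of_forall fun s => ?_)
    rw [norm_exp_ofReal_mul_ofReal_mul_I]
  simp_rw [eq_sum_re_exp, charFun_apply_real]
  rw [integral_div, integral_finsetSum]
  · congr 1
    refine Finset.sum_congr rfl fun j _ => ?_
    rw [integral_finsetSum]
    · exact Finset.sum_congr rfl fun k _ => integral_re (hint _)
    · exact fun k _ => (hint _).re
  · exact fun j _ => integrable_finsetSum _ fun k _ => (hint _).re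

lemma measureReal_singleton_zero_le_integral (τ : ℝ) {n : ℕ} (hn : n ≠ 0) (ν : Measure ℝ)
    [IsFiniteMeasure ν] : ν.real {0} ≤ ∫ s, fejerKernel τ n s ∂ν := by
  rw [← integral_indicator_one (measurableSet_singleton 0)]
  refine integral_mono ((integrable_const 1).indicator (measurableSet_singleton 0))
    (integrable τ n ν) fun s => ?_
  by_cases hs : s = 0
  · simp [hs, eq_one_of_exp_eq_one (τ := τ) (s := 0) (by simp) hn]
  · simpa [hs] using nonneg τ n s

lemma tendsto_integral {μ : Measure ℝ} [IsFiniteMeasure μ] {τ : ℝ}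
    (hτ : μ {s : ℝ | exp (τ * s * I) = 1} = μ {0}) :
    Tendsto (fun n => ∫ s, fejerKernel τ n s ∂μ) atTop (𝓝 (μ.real {0})) := by
  set L := {s : ℝ | exp (τ * s * I) = 1}
  have hL : MeasurableSet L := measurableSet_eq_fun (by fun_prop) measurable_const
  have hlim (s : ℝ) : Tendsto (fun n => fejerKernel τ n s) atTop (𝓝 (L.indicator 1 s)) := by
    by_cases hs : s ∈ L
    · rw [Set.indicator_of_mem hs]
      exact tendsto_const_nhds.congr' <| (eventually_ne_atTop 0).mono fun n hn =>
        (eq_one_of_exp_eq_one hs hn).symm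
    · rw [Set.indicator_of_notMem hs]
      exact tendsto_zero_of_exp_ne_one hs
  have hdom := tendsto_integral_of_dominated_convergence (μ := μ) (fun _ => 1)
    (fun n => (continuous τ n).aestronglyMeasurable) (integrable_const 1)
    (fun n => .of_forall fun s => by
      rw [Real.norm_of_nonneg (nonneg τ n s)]
      exact le_one τ n s)
    (.of_forall hlim)
  rwa [integral_indicator_one hL, measureReal_def, hτ, ← measureReal_def] at hdom

lemma tendsto_integral_of_tendsto_charFun {ι : Type*} {l : Filter ι} {μs : ι → Measure ℝ}
    [∀ i, IsFiniteMeasure (μs i)] {μ : Measure ℝ} [IsFiniteMeasure μ]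
    (h : ∀ t, Tendsto (fun i => charFun (μs i) t) l (𝓝 (charFun μ t))) (τ : ℝ) (n : ℕ) :
    Tendsto (fun i => ∫ s, fejerKernel τ n s ∂μs i) l (𝓝 (∫ s, fejerKernel τ n s ∂μ)) := by
  simp_rw [integral_eq_sum_re_charFun]
  refine .div_const (tendsto_finsetSum _ fun j _ => tendsto_finsetSum _ fun k _ => ?_) _
  exact (continuous_re.tendsto _).comp (h _)

end fejerKernel

lemma eventually_measureReal_singleton_zero_lt_of_tendsto_charFun {ι : Type*} {l : Filter ι}
    {μs : ι → Measure ℝ} [∀ i, IsFiniteMeasure (μs i)] {μ : Measure ℝ} [IsFiniteMeasure μ]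
    (h : ∀ t, Tendsto (fun i => charFun (μs i) t) l (𝓝 (charFun μ t)))
    {b : ℝ} (hb : μ.real {0} < b) : ∀ᶠ i in l, (μs i).real {0} < b := by
  obtain ⟨τ, hτ⟩ := exists_measure_setOf_exp_eq_one_eq_measure_singleton_zero μ
  obtain ⟨n, hnb, hn⟩ := (((fejerKernel.tendsto_integral hτ).eventually_lt_const hb).and
    (eventually_ne_atTop 0)).exists
  filter_upwards [(fejerKernel.tendsto_integral_of_tendsto_charFun h τ n).eventually_lt_const hnb]
    with i hi
  exact (fejerKernel.measureReal_singleton_zero_le_integral τ hn (μs i)).trans_lt hi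

open MeasureTheory Filter Topology in
theorem stmt0_general {ι : Type*} (l : Filter ι)
    (μΛ : ι → Measure ℝ) (μ : Measure ℝ)
    [∀ i, IsFiniteMeasure (μΛ i)] [IsFiniteMeasure μ]
    -- ⟨Ψ, e^{itA_Λ} Ψ⟩ → ⟨Ψ, e^{itA} Ψ⟩ for every t ∈ ℝ
    (hchar : ∀ t : ℝ,
      Tendsto (fun i => ∫ s : ℝ, Complex.exp (Complex.I * t * s) ∂(μΛ i)) l
        (𝓝 (∫ s : ℝ, Complex.exp (Complex.I * t * s) ∂μ)))
    -- ⟨Ψ, P_Λ Ψ⟩ ≥ ⟨Ψ, P Ψ⟩, i.e. μ_{Ψ,Λ}({0}) ≥ μ_Ψ({0})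
    (hge : ∀ i, μ {0} ≤ (μΛ i) {0}) :
    Tendsto (fun i => (μΛ i) {0}) l (𝓝 (μ {0})) := by
  have hcharFun (t : ℝ) : Tendsto (fun i => charFun (μΛ i) t) l (𝓝 (charFun μ t)) := by
    simpa only [charFun_apply_real, mul_comm I, mul_assoc] using hchar t
  rw [← ENNReal.tendsto_toReal_iff (fun i => measure_ne_top _ _) (measure_ne_top _ _)]
  refine tendsto_order.2 ⟨fun a ha => .of_forall fun i => ?_, fun b hb =>
    eventually_measureReal_singleton_zero_lt_of_tendsto_charFun hcharFun hb⟩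
  exact ha.trans_le (ENNReal.toReal_mono (measure_ne_top _ _) (hge i))

open MeasureTheory Filter Topology in
theorem stmt0 {H : Type*} [NormedAddCommGroup H] [InnerProductSpace ℂ H]
    (Ψ : H) {ι : Type*} (l : Filter ι) [l.NeBot]
    (μΛ : ι → Measure ℝ) (μ : Measure ℝ)
    [∀ i, IsFiniteMeasure (μΛ i)] [IsFiniteMeasure μ]
    -- spectral measures at Ψ have total mass ‖Ψ‖²
    (hmassΛ : ∀ i, (μΛ i) Set.univ = ENNReal.ofReal (‖Ψ‖ ^ 2))
    (hmass : μ Set.univ = ENNReal.ofReal (‖Ψ‖ ^ 2))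
    -- ⟨Ψ, e^{itA_Λ} Ψ⟩ → ⟨Ψ, e^{itA} Ψ⟩ for every t ∈ ℝ
    (hchar : ∀ t : ℝ,
      Tendsto (fun i => ∫ s : ℝ, Complex.exp (Complex.I * t * s) ∂(μΛ i)) l
        (𝓝 (∫ s : ℝ, Complex.exp (Complex.I * t * s) ∂μ)))
    -- ⟨Ψ, P_Λ Ψ⟩ ≥ ⟨Ψ, P Ψ⟩, i.e. μ_{Ψ,Λ}({0}) ≥ μ_Ψ({0})
    (hge : ∀ i, μ {0} ≤ (μΛ i) {0}) :
    Tendsto (fun i => (μΛ i) {0}) l (𝓝 (μ {0})) :=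
  stmt0_general l μΛ μ hchar hge
end

section
/- Let (f_Λ) be a net of X-valued functions, each bounded, continuous on the closed strip S = {|Im z| ≤ 1/2} and analytic in its interior, with a uniform bound sup_Λ sup_{z∈S} ‖f_Λ(z)‖ < ∞. If f_Λ(θ ± i/2) → 0 uniformly for θ in compact subsets of ℝ, and f_Λ(z) = e^{−z²} g_Λ(z) with sup_Λ sup_{θ∈ℝ} ‖g_Λ(θ ± i/2)‖ < ∞, then f_Λ → 0 uniformly on the whole closed strip S. -/
/-!
On each boundary line `Im z = ±1/2` the factorisation `f = e^{-z²} g` gives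
`‖f_Λ(θ ± i/2)‖ ≤ e^{1/4 - θ²} M`, a bound uniform in `Λ` that tends to `0` as `|θ| → ∞`;
together with uniform convergence on compacts this makes the boundary traces converge
uniformly on all of `ℝ`. Each `f_Λ` is bounded on the strip, so by the Phragmén–Lindelöf
principle its supremum on the strip is its supremum on the boundary.
-/

open Complex Filter Topology Set

section

variable {ι E : Type*} [NormedAddCommGroup E] {l : Filter ι}

theorem tendstoUniformly_of_tendstoUniformlyOn_isCompact_of_norm_le {α : Type*}
    [TopologicalSpace α] {F : ι → α → E} {φ : α → ℝ}
    (hK : ∀ K, IsCompact K → TendstoUniformlyOn F (fun _ => 0) l K)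
    (hφ : Tendsto φ (cocompact α) (𝓝 0)) (hle : ∀ i x, ‖F i x‖ ≤ φ x) :
    TendstoUniformly F (fun _ => 0) l := by
  rw [Metric.tendstoUniformly_iff]
  intro ε hε
  obtain ⟨K, hKc, hKφ⟩ := mem_cocompact.1 (hφ.eventually (gt_mem_nhds hε))
  filter_upwards [Metric.tendstoUniformlyOn_iff.1 (hK K hKc) ε hε] with i hi x
  by_cases hx : x ∈ K
  · exact hi x hx
  · rw [dist_zero_left]
    exact (hle i x).trans_lt (hKφ hx)

theorem norm_cexp_neg_sq (z : ℂ) : ‖cexp (-z ^ 2)‖ = Real.exp (z.im ^ 2 - z.re ^ 2) := by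
  rw [norm_exp]
  congr 1
  simp only [neg_re, sq, mul_re]
  ring

theorem tendsto_exp_sub_sq_mul_cocompact (c M : ℝ) :
    Tendsto (fun θ : ℝ => Real.exp (c - θ ^ 2) * M) (cocompact ℝ) (𝓝 0) := by
  have h := (tendsto_rpow_abs_mul_exp_neg_mul_sq_cocompact one_pos 0).mul_const
    (Real.exp c * M)
  rw [zero_mul] at h
  refine h.congr fun θ => ?_
  rw [Real.rpow_zero, one_mul, sub_eq_add_neg, Real.exp_add]
  ring_nf

variable [NormedSpace ℂ E]

theorem tendstoUniformly_trace_of_eq_cexp_neg_sq_smul {F G : ι → ℂ → E} {c M : ℝ}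
    (hFG : ∀ i (θ : ℝ), F i (θ + c * I) = cexp (-(θ + c * I) ^ 2) • G i (θ + c * I))
    (hG : ∀ i (θ : ℝ), ‖G i (θ + c * I)‖ ≤ M)
    (hK : ∀ K, IsCompact K →
      TendstoUniformlyOn (fun i (θ : ℝ) => F i (θ + c * I)) (fun _ => 0) l K) :
    TendstoUniformly (fun i (θ : ℝ) => F i (θ + c * I)) (fun _ => 0) l := by
  refine tendstoUniformly_of_tendstoUniformlyOn_isCompact_of_norm_le hK
    (tendsto_exp_sub_sq_mul_cocompact (c ^ 2) M) fun i θ => ?_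
  rw [hFG, norm_smul, norm_cexp_neg_sq]
  have hre : (θ + c * I : ℂ).re = θ := by simp
  have him : (θ + c * I : ℂ).im = c := by simp
  rw [hre, him]
  exact mul_le_mul_of_nonneg_left (hG i θ) (Real.exp_pos _).le

theorem norm_le_of_bounded_horizontal_strip {f : ℂ → E} {a b C : ℝ}
    (hd : DiffContOnCl ℂ f (im ⁻¹' Ioo a b)) (hbdd : ∃ M, ∀ z ∈ im ⁻¹' Ioo a b, ‖f z‖ ≤ M)
    (hle_a : ∀ z : ℂ, z.im = a → ‖f z‖ ≤ C) (hle_b : ∀ z : ℂ, z.im = b → ‖f z‖ ≤ C)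
    {z : ℂ} (hz : z ∈ im ⁻¹' Icc a b) : ‖f z‖ ≤ C := by
  obtain ⟨M, hM⟩ := hbdd
  refine PhragmenLindelof.horizontal_strip hd ⟨Real.pi / (b - a) - 1, by linarith, 0, ?_⟩
    hle_a hle_b hz.1 hz.2
  refine Asymptotics.IsBigO.of_bound M (eventually_inf_principal.2 (.of_forall fun w hw => ?_))
  simpa using hM w hw

theorem tendstoUniformlyOn_horizontal_strip {F : ι → ℂ → E} {a b : ℝ}
    (hd : ∀ i, DiffContOnCl ℂ (F i) (im ⁻¹' Ioo a b))
    (hbdd : ∀ i, ∃ M, ∀ z ∈ im ⁻¹' Ioo a b, ‖F i z‖ ≤ M)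
    (ha : TendstoUniformly (fun i (θ : ℝ) => F i (θ + a * I)) (fun _ => 0) l)
    (hb : TendstoUniformly (fun i (θ : ℝ) => F i (θ + b * I)) (fun _ => 0) l) :
    TendstoUniformlyOn F (fun _ => 0) l (im ⁻¹' Icc a b) := by
  rw [Metric.tendstoUniformlyOn_iff]
  intro ε hε
  have trace_le {c : ℝ} (h : TendstoUniformly (fun i (θ : ℝ) => F i (θ + c * I)) (fun _ => 0) l) :
      ∀ᶠ i in l, ∀ w : ℂ, w.im = c → ‖F i w‖ ≤ ε / 2 := by
    filter_upwards [Metric.tendstoUniformly_iff.1 h (ε / 2) (half_pos hε)] with i hi w hw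
    have := hi w.re
    rw [dist_zero_left, ← hw, re_add_im] at this
    exact this.le
  filter_upwards [trace_le ha, trace_le hb] with i hai hbi z hz
  rw [dist_zero_left]
  exact (norm_le_of_bounded_horizontal_strip (hd i) (hbdd i) hai hbi hz).trans_lt
    (half_lt_self hε)

end

open Filter Topology in
theorem stmt9_general {X : Type*} [NormedAddCommGroup X] [NormedSpace ℂ X]
    {ι : Type*} (l : Filter ι)
    (f g : ι → ℂ → X)
    (hcont : ∀ i, ContinuousOn (f i) {z : ℂ | |z.im| ≤ 1/2})
    (hanal : ∀ i, DifferentiableOn ℂ (f i) {z : ℂ | |z.im| < 1/2})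
    (hbdd : ∃ M : ℝ, ∀ i, ∀ z ∈ {z : ℂ | |z.im| ≤ 1/2}, ‖f i z‖ ≤ M)
    (hbndryup : ∀ K : Set ℝ, IsCompact K →
      TendstoUniformlyOn (fun i (θ : ℝ) => f i ((θ : ℂ) + Complex.I / 2)) (fun _ => 0) l K)
    (hbndrydown : ∀ K : Set ℝ, IsCompact K →
      TendstoUniformlyOn (fun i (θ : ℝ) => f i ((θ : ℂ) - Complex.I / 2)) (fun _ => 0) l K)
    (hfg : ∀ i, ∀ z ∈ {z : ℂ | |z.im| ≤ 1/2}, f i z = Complex.exp (-z ^ 2) • g i z)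
    (hgbdd : ∃ M : ℝ, ∀ i, ∀ θ : ℝ,
      ‖g i (θ + Complex.I / 2)‖ ≤ M ∧ ‖g i (θ - Complex.I / 2)‖ ≤ M) :
    TendstoUniformlyOn (fun i z => f i z) (fun _ => 0) l {z : ℂ | |z.im| ≤ 1/2} := by
  obtain ⟨M, hM⟩ := hbdd
  obtain ⟨Mg, hMg⟩ := hgbdd
  have hS : {z : ℂ | |z.im| ≤ 1/2} = im ⁻¹' Icc (-(1/2)) (1/2) := by ext; simp [abs_le]
  have hS' : {z : ℂ | |z.im| < 1/2} = im ⁻¹' Ioo (-(1/2)) (1/2) := by ext; simp [abs_lt]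
  have hmem (c θ : ℝ) (hc : |c| = 1/2) : (θ + c * I : ℂ) ∈ {z : ℂ | |z.im| ≤ 1/2} := by
    simp [hc]
  have hup_eq (θ : ℝ) : (θ : ℂ) + ((1/2 : ℝ) : ℂ) * I = θ + I / 2 := by push_cast; ring
  have hdown_eq (θ : ℝ) : (θ : ℂ) + ((-(1/2) : ℝ) : ℂ) * I = θ - I / 2 := by push_cast; ring
  have hup := tendstoUniformly_trace_of_eq_cexp_neg_sq_smul (c := 1/2) (M := Mg)
    (fun i θ => hfg i _ (hmem _ θ (by norm_num))) (fun i θ => hup_eq θ ▸ (hMg i θ).1)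
    (by simpa only [hup_eq] using hbndryup)
  have hdown := tendstoUniformly_trace_of_eq_cexp_neg_sq_smul (c := -(1/2)) (M := Mg)
    (fun i θ => hfg i _ (hmem _ θ (by norm_num))) (fun i θ => hdown_eq θ ▸ (hMg i θ).2)
    (by simpa only [hdown_eq] using hbndrydown)
  rw [hS]
  refine tendstoUniformlyOn_horizontal_strip (fun i => ⟨hS' ▸ hanal i, ?_⟩)
    (fun i => ⟨M, fun z hz => hM i z (hS ▸ preimage_mono Ioo_subset_Icc_self hz)⟩) hdown hup
  rw [closure_preimage_im, closure_Ioo (by norm_num), ← hS]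
  exact hcont i

open Filter Topology in
theorem stmt9 {X : Type*} [NormedAddCommGroup X] [NormedSpace ℂ X]
    {ι : Type*} (l : Filter ι) [l.NeBot]
    (f g : ι → ℂ → X)
    (hcont : ∀ i, ContinuousOn (f i) {z : ℂ | |z.im| ≤ 1/2})
    (hanal : ∀ i, DifferentiableOn ℂ (f i) {z : ℂ | |z.im| < 1/2})
    (hbdd : ∃ M : ℝ, ∀ i, ∀ z ∈ {z : ℂ | |z.im| ≤ 1/2}, ‖f i z‖ ≤ M)
    (hbndryup : ∀ K : Set ℝ, IsCompact K →
      TendstoUniformlyOn (fun i (θ : ℝ) => f i ((θ : ℂ) + Complex.I / 2)) (fun _ => 0) l K)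
    (hbndrydown : ∀ K : Set ℝ, IsCompact K →
      TendstoUniformlyOn (fun i (θ : ℝ) => f i ((θ : ℂ) - Complex.I / 2)) (fun _ => 0) l K)
    (hfg : ∀ i, ∀ z ∈ {z : ℂ | |z.im| ≤ 1/2}, f i z = Complex.exp (-z ^ 2) • g i z)
    (hgbdd : ∃ M : ℝ, ∀ i, ∀ θ : ℝ,
      ‖g i (θ + Complex.I / 2)‖ ≤ M ∧ ‖g i (θ - Complex.I / 2)‖ ≤ M) :
    TendstoUniformlyOn (fun i z => f i z) (fun _ => 0) l {z : ℂ | |z.im| ≤ 1/2} :=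
  stmt9_general l f g hcont hanal hbdd hbndryup hbndrydown hfg hgbdd
end

section
/- Let O be a finite-dimensional C*-algebra (matrix algebra), ω a faithful state on O with density matrix ρ, and V = V* ∈ O. Define σ = i[log ρ, V] and ω_s(A) = ω(e^{isH}Ae^{−isH}) for a self-adjoint H with e^{isH}, generating dynamics τ^s. Then the relative entropy satisfies Ent(ω_s | ω) = −∫_0^s ω_t(σ) dt, where Ent(ν|ω) = tr(ν(log ρ_ω − log ρ_ν)) and σ is the entropy production observable, provided ω is invariant under the dynamics generated by H − V (i.e., [H − V, ρ] = 0). -/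
/-!
Write `U t = exp (t • B)` with `B = i H`, so that `ρ_s = U (-s) ρ U s`, and let `L = log ρ`.
By cyclicity of the trace, `Ent(ω_s | ω) = tr (ρ U s L U (-s)) - tr (ρ L)`, and Duhamel's formula
`U s L U (-s) - L = ∫₀ˢ U t ⁅B, L⁆ U (-t) dt` turns this into an integral. Since `H - V` commutes
with `ρ = exp L`, it commutes with `L = log ρ` (functional calculus), hence `⁅B, L⁆ = i ⁅V, L⁆ = -σ`.
-/

open NormedSpace

theorem commute_of_commute_exp {A : Type*} [NormedRing A] [StarRing A] [NormedAlgebra ℝ A]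
    [ContinuousFunctionalCalculus ℝ A IsSelfAdjoint] [IsTopologicalRing A] [T2Space A]
    {a b : A} (ha : IsSelfAdjoint a) (h : Commute b (exp a)) : Commute b a := by
  have h_log : Commute b (CFC.log (exp a)) := (h.symm.cfc_real Real.log).symm
  rwa [CFC.log_exp a ha] at h_log

section Duhamel

variable {𝔸 : Type*} [NormedRing 𝔸] [NormedAlgebra ℝ 𝔸] [CompleteSpace 𝔸]

theorem hasDerivAt_exp_smul_mul_mul_exp_neg_smul (B C : 𝔸) (t : ℝ) :
    HasDerivAt (fun u : ℝ => exp (u • B) * C * exp (-(u • B)))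
      (exp (t • B) * ⁅B, C⁆ * exp (-(t • B))) t := by
  have hE := hasDerivAt_exp_smul_const (𝕂 := ℝ) B t
  have hF := hasDerivAt_exp_smul_const (𝕂 := ℝ) (-B) t
  simp only [smul_neg, mul_neg] at hF
  refine ((hE.mul_const C).mul hF).congr_deriv ?_
  rw [← ((Commute.refl B).smul_right t).neg_right.exp_right.eq, Ring.lie_def]
  noncomm_ring

theorem continuous_exp_smul_mul_mul_exp_neg_smul (B C : 𝔸) :
    Continuous fun t : ℝ => exp (t • B) * C * exp (-(t • B)) :=
  continuous_iff_continuousAt.2 fun t =>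
    (hasDerivAt_exp_smul_mul_mul_exp_neg_smul B C t).continuousAt

theorem exp_smul_mul_mul_exp_neg_smul_sub (B C : 𝔸) (s : ℝ) :
    exp (s • B) * C * exp (-(s • B)) - C =
      ∫ t in (0 : ℝ)..s, exp (t • B) * ⁅B, C⁆ * exp (-(t • B)) := by
  rw [intervalIntegral.integral_eq_sub_of_hasDerivAt
    (fun t _ => hasDerivAt_exp_smul_mul_mul_exp_neg_smul B C t)
    ((continuous_exp_smul_mul_mul_exp_neg_smul B ⁅B, C⁆).intervalIntegrable 0 s)]
  simp

end Duhamel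

namespace Matrix

variable {n : Type*} [Fintype n] [DecidableEq n]

theorem trace_conj_mul_sub_conj {R : Type*} [CommRing R] {E E' : Matrix n n R} (hE : E * E' = 1)
    (ρ L : Matrix n n R) :
    trace ((E' * ρ * E) * (L - E' * L * E)) = trace (ρ * (E * L * E')) - trace (ρ * L) := by
  calc _ = trace (E' * (ρ * E * L)) - trace (E' * (ρ * E * E' * L * E)) := by
        simp only [Matrix.mul_sub, trace_sub, Matrix.mul_assoc]
    _ = trace (ρ * E * L * E') - trace (ρ * E * E' * L * (E * E')) := by
        rw [trace_mul_comm E', trace_mul_comm E']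
        simp only [Matrix.mul_assoc]
    _ = _ := by
        rw [hE, Matrix.mul_one, Matrix.mul_assoc ρ E E', hE, Matrix.mul_one]
        simp only [Matrix.mul_assoc]

open scoped Norms.L2Operator

theorem IsHermitian.commute_of_commute_exp {L X : Matrix n n ℂ} (hL : L.IsHermitian)
    (h : Commute X (NormedSpace.exp L)) : Commute X L :=
  _root_.commute_of_commute_exp hL.isSelfAdjoint h

theorem trace_mul_exp_conj_sub (ρ B C : Matrix n n ℂ) (s : ℝ) :
    trace (ρ * (exp (s • B) * C * exp (-(s • B)))) - trace (ρ * C) =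
      ∫ t in (0 : ℝ)..s, trace (ρ * (exp (t • B) * ⁅B, C⁆ * exp (-(t • B)))) := by
  let traceMulLeft : Matrix n n ℂ →L[ℝ] ℂ :=
    (((traceLinearMap n ℂ ℂ).comp (LinearMap.mulLeft ℂ ρ)).restrictScalars ℝ).toContinuousLinearMap
  calc _ = traceMulLeft (exp (s • B) * C * exp (-(s • B)) - C) := by
        simp [traceMulLeft, Matrix.mul_sub]
    _ = _ := by
      rw [exp_smul_mul_mul_exp_neg_smul_sub, ← traceMulLeft.intervalIntegral_comp_comm
        ((continuous_exp_smul_mul_mul_exp_neg_smul B ⁅B, C⁆).intervalIntegrable 0 s)]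
      rfl

end Matrix

open NormedSpace ComplexOrder in
theorem stmt19_general {N : ℕ} (ρ Hm V L : Matrix (Fin N) (Fin N) ℂ)
    (hL : L.IsHermitian)
    (hlog : exp L = ρ)
    (hinv : (Hm - V) * ρ = ρ * (Hm - V))
    (s : ℝ) :
    Matrix.trace
      ((exp ((-(Complex.I * s)) • Hm) * ρ * exp ((Complex.I * s) • Hm)) *
        (L - exp ((-(Complex.I * s)) • Hm) * L * exp ((Complex.I * s) • Hm)))
    = - ∫ t in (0:ℝ)..s,
        Matrix.trace (ρ *
          (exp ((Complex.I * t) • Hm) * (Complex.I • (L * V - V * L)) *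
            exp ((-(Complex.I * t)) • Hm))) := by
  set B := Complex.I • Hm
  have h_smul (t : ℝ) : (Complex.I * t) • Hm = t • B := by
    rw [mul_comm, ← Complex.real_smul, smul_assoc]
  have h_HL : Hm * L - L * Hm = V * L - L * V := by
    have := (hL.commute_of_commute_exp (X := Hm - V) (hlog ▸ hinv)).eq
    rwa [sub_mul, mul_sub, sub_eq_sub_iff_sub_eq_sub] at this
  have h_σ : Complex.I • (L * V - V * L) = -⁅B, L⁆ := by
    rw [Ring.lie_def, smul_mul_assoc, mul_smul_comm, ← smul_sub, h_HL, ← smul_neg, neg_sub]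
  have h_inv : exp (s • B) * exp (-(s • B)) = 1 := by
    rw [← Matrix.exp_add_of_commute _ _ (Commute.refl (s • B)).neg_right, add_neg_cancel, exp_zero]
  simp only [neg_smul, h_smul, h_σ, Matrix.mul_neg, Matrix.neg_mul, Matrix.trace_neg,
    intervalIntegral.integral_neg, neg_neg]
  rw [Matrix.trace_conj_mul_sub_conj h_inv, Matrix.trace_mul_exp_conj_sub]

open NormedSpace ComplexOrder in
theorem stmt19 {N : ℕ} (ρ Hm V L : Matrix (Fin N) (Fin N) ℂ)
    (hρpos : ρ.PosDef) (hρtr : ρ.trace = 1)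
    (hHm : Hm.IsHermitian) (hV : V.IsHermitian) (hL : L.IsHermitian)
    (hlog : exp L = ρ)
    (hinv : (Hm - V) * ρ = ρ * (Hm - V))
    (s : ℝ) :
    Matrix.trace
      ((exp ((-(Complex.I * s)) • Hm) * ρ * exp ((Complex.I * s) • Hm)) *
        (L - exp ((-(Complex.I * s)) • Hm) * L * exp ((Complex.I * s) • Hm)))
    = - ∫ t in (0:ℝ)..s,
        Matrix.trace (ρ *
          (exp ((Complex.I * t) • Hm) * (Complex.I • (L * V - V * L)) *
            exp ((-(Complex.I * t)) • Hm))) :=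
  stmt19_general ρ Hm V L hL hlog hinv s
end
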